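/- arXiv:0803.4374 — 3 statements merged into one kernel-verified Lean document; each statement's English description precedes it below -/
import Mathlib

section
/- Let x₀, x₁, x₂ be three pairwise distinct elements of a field k. Then in K^M_2(k), {x₁ - x₀, x₂ - x₀} = {x₀ - x₁, x₂ - x₁} - {x₀ - x₂, x₁ - x₂} + {-1, -1}. -/
open TensorProduct

/-- The subgroup of Steinberg relations in `kˣ ⊗ℤ kˣ`: generated by `a ⊗ b` with `a + b = 1`. -/
noncomputable def SteinbergSubgroup (k : Type*) [Field k] :
    AddSubgroup (Additive kˣ ⊗[ℤ] Additive kˣ) :=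
  AddSubgroup.closure
    {z | ∃ a b : kˣ, (a : k) + (b : k) = 1 ∧
      z = Additive.ofMul a ⊗ₜ[ℤ] Additive.ofMul b}

/-- The second Milnor K-group of a field `k`. -/
abbrev MilnorK2 (k : Type*) [Field k] :=
  (Additive kˣ ⊗[ℤ] Additive kˣ) ⧸ SteinbergSubgroup k

/-- The Milnor symbol `{a, b}` in `K^M_2(k)`. -/
noncomputable def milnorSymbol {k : Type*} [Field k] (a b : kˣ) : MilnorK2 k :=
  QuotientAddGroup.mk (Additive.ofMul a ⊗ₜ[ℤ] Additive.ofMul b)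

/-!
Put `a = x₁ - x₀`, `b = x₂ - x₀`, `c = x₂ - x₁`. Since `a + c = b`, the Steinberg relation
`{a/b, c/b} = 0` expands by bilinearity to `{a, b} = {a, c} - {b, c} + {b, b}`. Moreover
`{b, b} = {b, -1}` because `{b, -b} = 0`, and `{b, -1}` is `2`-torsion. Writing the remaining
differences as `-a`, `-b`, `-c` and expanding the signs, the `{-1, c}` terms cancel and only
`{-1, -1}` survives.
-/

section MilnorSymbol

variable {k : Type*} [Field k]

theorem milnorSymbol_mul_left (a b c : kˣ) :
    milnorSymbol (a * b) c = milnorSymbol a c + milnorSymbol b c := by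
  simp only [milnorSymbol, ofMul_mul, add_tmul, QuotientAddGroup.mk_add]

theorem milnorSymbol_mul_right (a b c : kˣ) :
    milnorSymbol a (b * c) = milnorSymbol a b + milnorSymbol a c := by
  simp only [milnorSymbol, ofMul_mul, tmul_add, QuotientAddGroup.mk_add]

theorem milnorSymbol_inv_left (a b : kˣ) : milnorSymbol a⁻¹ b = -milnorSymbol a b := by
  simp only [milnorSymbol, ofMul_inv, neg_tmul, QuotientAddGroup.mk_neg]

theorem milnorSymbol_inv_right (a b : kˣ) : milnorSymbol a b⁻¹ = -milnorSymbol a b := by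
  simp only [milnorSymbol, ofMul_inv, tmul_neg, QuotientAddGroup.mk_neg]

theorem milnorSymbol_one_left (b : kˣ) : milnorSymbol 1 b = 0 := by
  simp only [milnorSymbol, ofMul_one, zero_tmul, QuotientAddGroup.mk_zero]

theorem milnorSymbol_neg_left (a b : kˣ) :
    milnorSymbol (-a) b = milnorSymbol (-1) b + milnorSymbol a b := by
  rw [← neg_one_mul a, milnorSymbol_mul_left]

theorem milnorSymbol_neg_right (a b : kˣ) :
    milnorSymbol a (-b) = milnorSymbol a (-1) + milnorSymbol a b := by
  rw [← neg_one_mul b, milnorSymbol_mul_right]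

theorem neg_milnorSymbol_neg_one_right (a : kˣ) : -milnorSymbol a (-1) = milnorSymbol a (-1) := by
  rw [← milnorSymbol_inv_right, inv_neg_one]

theorem milnorSymbol_eq_zero_of_add_eq_one (a b : kˣ) (h : (a : k) + b = 1) :
    milnorSymbol a b = 0 :=
  (QuotientAddGroup.eq_zero_iff _).mpr (AddSubgroup.subset_closure ⟨a, b, h, rfl⟩)

/-- The Steinberg relation `{a/b, c/b} = 0`, expanded by bilinearity. -/
theorem milnorSymbol_of_add_eq (a b c : kˣ) (h : (a : k) + c = b) :
    milnorSymbol a b = milnorSymbol a c - milnorSymbol b c + milnorSymbol b b := by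
  have hsteinberg : milnorSymbol (a * b⁻¹) (c * b⁻¹) = 0 := by
    apply milnorSymbol_eq_zero_of_add_eq_one
    rw [Units.val_mul, Units.val_mul, ← add_mul, h, Units.mul_inv]
  calc milnorSymbol a b = milnorSymbol a b + milnorSymbol (a * b⁻¹) (c * b⁻¹) := by
        rw [hsteinberg, add_zero]
    _ = milnorSymbol a c - milnorSymbol b c + milnorSymbol b b := by
        simp only [milnorSymbol_mul_left, milnorSymbol_mul_right, milnorSymbol_inv_left,
          milnorSymbol_inv_right]
        abel

/-- Uses `-a = (1 - a) / (1 - a⁻¹)` for `a ≠ 1`. -/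
theorem milnorSymbol_neg_self (a : kˣ) : milnorSymbol a (-a) = 0 := by
  rcases eq_or_ne a 1 with rfl | ha
  · exact milnorSymbol_one_left _
  have ha' : (a : k) ≠ 1 := fun h ↦ ha (Units.ext h)
  let u : kˣ := Units.mk0 (1 - a) (sub_ne_zero.mpr ha'.symm)
  let v : kˣ := Units.mk0 (1 - a⁻¹) (sub_ne_zero.mpr (by simpa [eq_comm] using ha))
  have hneg : -a = u * v⁻¹ := by
    rw [eq_mul_inv_iff_mul_eq]
    ext
    simp only [u, v, Units.val_mul, Units.val_neg, Units.val_mk0, Units.val_inv_eq_inv_val]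
    field_simp
    ring
  have hu : milnorSymbol a u = 0 := milnorSymbol_eq_zero_of_add_eq_one a u (by simp [u])
  have hv : milnorSymbol a v = 0 := by
    rw [← inv_inv a, milnorSymbol_inv_left, neg_eq_zero]
    exact milnorSymbol_eq_zero_of_add_eq_one a⁻¹ v (by simp [v])
  rw [hneg, milnorSymbol_mul_right, milnorSymbol_inv_right, hu, hv, neg_zero, add_zero]

theorem milnorSymbol_self (a : kˣ) : milnorSymbol a a = milnorSymbol a (-1) := by
  have h := milnorSymbol_neg_right a (-a)
  rwa [neg_neg, milnorSymbol_neg_self, add_zero] at h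

end MilnorSymbol

theorem milnorSymbol_key_relation_l2 (k : Type*) [Field k] (x₀ x₁ x₂ : k)
    (h01 : x₀ ≠ x₁) (h02 : x₀ ≠ x₂) (h12 : x₁ ≠ x₂) :
    milnorSymbol (Units.mk0 (x₁ - x₀) (sub_ne_zero_of_ne h01.symm))
        (Units.mk0 (x₂ - x₀) (sub_ne_zero_of_ne h02.symm))
      = milnorSymbol (Units.mk0 (x₀ - x₁) (sub_ne_zero_of_ne h01))
          (Units.mk0 (x₂ - x₁) (sub_ne_zero_of_ne h12.symm))
        - milnorSymbol (Units.mk0 (x₀ - x₂) (sub_ne_zero_of_ne h02))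
            (Units.mk0 (x₁ - x₂) (sub_ne_zero_of_ne h12))
        + milnorSymbol (-1 : kˣ) (-1 : kˣ) := by
  set a : kˣ := Units.mk0 (x₁ - x₀) (sub_ne_zero_of_ne h01.symm)
  set b : kˣ := Units.mk0 (x₂ - x₀) (sub_ne_zero_of_ne h02.symm)
  set c : kˣ := Units.mk0 (x₂ - x₁) (sub_ne_zero_of_ne h12.symm)
  have ha : Units.mk0 (x₀ - x₁) (sub_ne_zero_of_ne h01) = -a := by ext; simp [a]
  have hb : Units.mk0 (x₀ - x₂) (sub_ne_zero_of_ne h02) = -b := by ext; simp [b]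
  have hc : Units.mk0 (x₁ - x₂) (sub_ne_zero_of_ne h12) = -c := by ext; simp [c]
  have hsum : (a : k) + c = b := by simp only [a, b, c, Units.val_mk0]; ring
  rw [ha, hb, hc, milnorSymbol_of_add_eq a b c hsum, milnorSymbol_self,
    milnorSymbol_neg_left a, milnorSymbol_neg_left b, milnorSymbol_neg_right b c,
    milnorSymbol_neg_right (-1) c]
  conv_lhs => rw [← neg_milnorSymbol_neg_one_right b]
  abel
end

section
/- For any abelian group G and any map D from pairs of commuting invertible n×n matrices over a field k (for all n ≥ 1) to G satisfying: (i') D(A₁, A₂) = 0 whenever A₁ or A₂ is an identity matrix; (ii) D is additive on block diagonal sums; (iii) D is invariant under simultaneous conjugation; (iv) D is invariant under polynomial homotopy (D(A₁(0), A₂(0)) = D(A₁(1), A₂(1)) for commuting A₁(t), A₂(t) ∈ GL_n(k[t])); D is multiplicative in each argument: D(A·B, C) = D(A, C) + D(B, C) for commuting invertible A, B, C ∈ GL_n(k). -/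
/-!
Put `C' = diag(C, C)` in the second slot and work in size `2n`. Then
`D(A, C) + D(B, C) = D(diag(A, B), C')`; the homotopy `[[A, tI], [0, B]]` joins `diag(A, B)` to
`[[A, I], [0, B]]`, which is conjugate by `[[I, 0], [A, I]]` to `[[0, I], [-AB, A + B]]`. The
homotopy `[[0, I], [-AB, t(I + AB) + (1 - t)(A + B)]]` is invertible over `k[t]` (its determinant
is `± det(AB)`) and ends at `[[0, I], [-AB, I + AB]]`, which is what the same two steps produce
from the pair `(I, AB)`. Hence `D(A, C) + D(B, C) = D(I, C) + D(AB, C) = D(AB, C)`. Every matrix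
involved commutes with `C'` because `A` and `B` commute with `C`.
-/

open Matrix Polynomial

namespace Matrix

theorem commute_fromBlocks_diag {ι α : Type*} [Fintype ι] [Semiring α]
    {M₁₁ M₁₂ M₂₁ M₂₂ W : Matrix ι ι α} (h₁₁ : Commute M₁₁ W) (h₁₂ : Commute M₁₂ W)
    (h₂₁ : Commute M₂₁ W) (h₂₂ : Commute M₂₂ W) :
    Commute (fromBlocks M₁₁ M₁₂ M₂₁ M₂₂) (fromBlocks W 0 0 W) := by
  simp only [Commute, SemiconjBy, fromBlocks_multiply, mul_zero, zero_mul, add_zero, zero_add,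
    h₁₁.eq, h₁₂.eq, h₂₁.eq, h₂₂.eq]

variable {R : Type*} [CommRing R] {ι : Type*} [Fintype ι] [DecidableEq ι]

theorem isUnit_fromBlocks_zero_one {Z : Matrix ι ι R} (Y : Matrix ι ι R) (hZ : IsUnit Z) :
    IsUnit (fromBlocks (0 : Matrix ι ι R) 1 Z Y) := by
  have hswap : IsUnit (fromBlocks 0 (1 : Matrix ι ι R) 1 0) :=
    IsUnit.of_mul_eq_one (fromBlocks 0 (1 : Matrix ι ι R) 1 0) (by rw [fromBlocks_multiply]; simp)
  have hfactor :
      fromBlocks 0 1 Z Y = fromBlocks 1 0 Y Z * fromBlocks 0 (1 : Matrix ι ι R) 1 0 := by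
    simp [fromBlocks_multiply]
  rw [hfactor]
  exact (isUnit_fromBlocks_zero₁₂.2 ⟨isUnit_one, hZ⟩).mul hswap

noncomputable def linePath (M N : Matrix ι ι R) : Matrix ι ι R[X] :=
  C.mapMatrix M + (X : R[X]) • C.mapMatrix (N - M)

theorem linePath_eval (M N : Matrix ι ι R) (r : R) :
    (linePath M N).map (eval r) = M + r • (N - M) := by
  ext i j
  simp [linePath]

theorem linePath_eval_zero (M N : Matrix ι ι R) : (linePath M N).map (eval 0) = M := by
  simp [linePath_eval]

theorem linePath_eval_one (M N : Matrix ι ι R) : (linePath M N).map (eval 1) = N := by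
  simp [linePath_eval]

theorem mapMatrix_fromBlocks_diag {S : Type*} [CommRing S] (f : R →+* S) (W : Matrix ι ι R) :
    f.mapMatrix (fromBlocks W 0 0 W) = fromBlocks (f.mapMatrix W) 0 0 (f.mapMatrix W) := by
  simp [fromBlocks_map]

theorem commute_linePath {M N W : Matrix ι ι R} (hM : Commute M W) (hN : Commute N W) :
    Commute (linePath M N) (C.mapMatrix W) :=
  (hM.map _).add_left (((hN.sub_left hM).map _).smul_left X)

end Matrix

namespace JointDeterminant

variable {k : Type*} [CommRing k] {G : Type*}

def IsConjInvariant (D : ∀ {n : ℕ}, Matrix (Fin n) (Fin n) k → Matrix (Fin n) (Fin n) k → G) :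
    Prop :=
  ∀ (n : ℕ) (A₁ A₂ S : Matrix (Fin n) (Fin n) k),
    IsUnit A₁ → IsUnit A₂ → IsUnit S → A₁ * A₂ = A₂ * A₁ →
    D (S * A₁ * S⁻¹) (S * A₂ * S⁻¹) = D A₁ A₂

def IsHomotopyInvariant
    (D : ∀ {n : ℕ}, Matrix (Fin n) (Fin n) k → Matrix (Fin n) (Fin n) k → G) : Prop :=
  ∀ (n : ℕ) (P₁ P₂ : Matrix (Fin n) (Fin n) k[X]),
    IsUnit P₁ → IsUnit P₂ → P₁ * P₂ = P₂ * P₁ →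
    D (P₁.map (eval 0)) (P₂.map (eval 0)) = D (P₁.map (eval 1)) (P₂.map (eval 1))

variable (D : ∀ {n : ℕ}, Matrix (Fin n) (Fin n) k → Matrix (Fin n) (Fin n) k → G)

def sumD {m n : ℕ} (M N : Matrix (Fin m ⊕ Fin n) (Fin m ⊕ Fin n) k) : G :=
  D (reindex finSumFinEquiv finSumFinEquiv M) (reindex finSumFinEquiv finSumFinEquiv N)

variable {D} {m n : ℕ}

theorem sumD_conj (hD : IsConjInvariant D) {M N S : Matrix (Fin m ⊕ Fin n) (Fin m ⊕ Fin n) k}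
    (hM : IsUnit M) (hN : IsUnit N) (hS : IsUnit S) (hMN : Commute M N) :
    sumD D (S * M * S⁻¹) (S * N * S⁻¹) = sumD D M N := by
  let e := reindexAlgEquiv k k (finSumFinEquiv (m := m) (n := n))
  have he : ∀ M, reindex finSumFinEquiv finSumFinEquiv M = e M := fun _ => rfl
  have hinv : e S⁻¹ = (e S)⁻¹ := (inv_reindex _ _ S).symm
  simp only [sumD, he, map_mul, hinv]
  exact hD _ _ _ _ (hM.map e) (hN.map e) (hS.map e) (by rw [← map_mul, hMN.eq, map_mul])

theorem sumD_homotopy (hD : IsHomotopyInvariant D)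
    {P : Matrix (Fin m ⊕ Fin n) (Fin m ⊕ Fin n) k[X]}
    {N : Matrix (Fin m ⊕ Fin n) (Fin m ⊕ Fin n) k}
    (hP : IsUnit P) (hN : IsUnit N) (hPN : Commute P (C.mapMatrix N)) :
    sumD D (P.map (eval 0)) N = sumD D (P.map (eval 1)) N := by
  let e := reindexAlgEquiv k[X] k[X] (finSumFinEquiv (m := m) (n := n))
  have h := hD _ (e P) (e (C.mapMatrix N)) (hP.map e) ((hN.map C.mapMatrix).map e)
    (by rw [← map_mul, hPN.eq, map_mul])
  simpa [sumD, e, reindex_apply, submatrix_map, Function.comp_def] using h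

variable {A B C : Matrix (Fin n) (Fin n) k}

theorem sumD_fromBlocks_upper_eq_diag (hD : IsHomotopyInvariant D) (Y : Matrix (Fin n) (Fin n) k)
    (hA : IsUnit A) (hB : IsUnit B) (hC : IsUnit C)
    (hAC : Commute A C) (hBC : Commute B C) (hYC : Commute Y C) :
    sumD D (fromBlocks A Y 0 B) (fromBlocks C 0 0 C)
      = sumD D (fromBlocks A 0 0 B) (fromBlocks C 0 0 C) := by
  have h := sumD_homotopy hD
    (P := fromBlocks (Polynomial.C.mapMatrix A) (linePath 0 Y) 0 (Polynomial.C.mapMatrix B))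
    (N := fromBlocks C 0 0 C) (isUnit_fromBlocks_zero₂₁.2 ⟨hA.map _, hB.map _⟩)
    (isUnit_fromBlocks_zero₂₁.2 ⟨hC, hC⟩) ?_
  · simpa [fromBlocks_map, linePath_eval_zero, linePath_eval_one, Function.comp_def] using h.symm
  rw [mapMatrix_fromBlocks_diag]
  exact commute_fromBlocks_diag (hAC.map _) (commute_linePath (Commute.zero_left _) hYC)
    (Commute.zero_left _) (hBC.map _)

theorem sumD_fromBlocks_one_eq_companion (hD : IsConjInvariant D)
    (hA : IsUnit A) (hB : IsUnit B) (hC : IsUnit C)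
    (hAB : Commute A B) (hAC : Commute A C) (hBC : Commute B C) :
    sumD D (fromBlocks A 1 0 B) (fromBlocks C 0 0 C)
      = sumD D (fromBlocks 0 1 (-(A * B)) (A + B)) (fromBlocks C 0 0 C) := by
  have hinv : (fromBlocks 1 0 A 1 : Matrix (Fin n ⊕ Fin n) (Fin n ⊕ Fin n) k)⁻¹
      = fromBlocks 1 0 (-A) 1 :=
    inv_eq_right_inv (by rw [fromBlocks_multiply]; simp)
  have h := sumD_conj hD (M := fromBlocks A 1 0 B) (N := fromBlocks C 0 0 C)
    (S := fromBlocks 1 0 A 1) (isUnit_fromBlocks_zero₂₁.2 ⟨hA, hB⟩)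
    (isUnit_fromBlocks_zero₂₁.2 ⟨hC, hC⟩) (isUnit_fromBlocks_zero₁₂.2 ⟨isUnit_one, isUnit_one⟩)
    (commute_fromBlocks_diag hAC (Commute.one_left C) (Commute.zero_left C) hBC)
  have hM : fromBlocks 1 0 A 1 * fromBlocks A 1 0 B * fromBlocks 1 0 (-A) 1
      = fromBlocks 0 1 (-(A * B)) (A + B) := by
    simp only [fromBlocks_multiply]
    congr 1 <;> simp [add_mul, hAB.eq]
  have hN : fromBlocks 1 0 A 1 * fromBlocks C 0 0 C * fromBlocks 1 0 (-A) 1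
      = fromBlocks C 0 0 C := by
    simp only [fromBlocks_multiply]
    congr 1 <;> simp [hAC.eq]
  rw [hinv, hM, hN] at h
  exact h.symm

theorem sumD_companion_eq_companion (hD : IsHomotopyInvariant D) {Z : Matrix (Fin n) (Fin n) k}
    (Y Y' : Matrix (Fin n) (Fin n) k) (hZ : IsUnit Z) (hC : IsUnit C)
    (hZC : Commute Z C) (hYC : Commute Y C) (hY'C : Commute Y' C) :
    sumD D (fromBlocks 0 1 Z Y) (fromBlocks C 0 0 C)
      = sumD D (fromBlocks 0 1 Z Y') (fromBlocks C 0 0 C) := by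
  have h := sumD_homotopy hD (P := fromBlocks 0 1 (Polynomial.C.mapMatrix Z) (linePath Y Y'))
    (N := fromBlocks C 0 0 C) (isUnit_fromBlocks_zero_one _ (hZ.map _))
    (isUnit_fromBlocks_zero₂₁.2 ⟨hC, hC⟩) ?_
  · simpa [fromBlocks_map, linePath_eval_zero, linePath_eval_one, Function.comp_def] using h
  rw [mapMatrix_fromBlocks_diag]
  exact commute_fromBlocks_diag (Commute.zero_left _) (Commute.one_left _) (hZC.map _)
    (commute_linePath hYC hY'C)

end JointDeterminant

open JointDeterminant

theorem joint_determinant_multiplicative (k : Type*) [Field k] (G : Type*) [AddCommGroup G]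
    (D : ∀ {n : ℕ}, Matrix (Fin n) (Fin n) k → Matrix (Fin n) (Fin n) k → G)
    (hId : ∀ (n : ℕ) (A : Matrix (Fin n) (Fin n) k), IsUnit A →
      D A (1 : Matrix (Fin n) (Fin n) k) = 0 ∧ D (1 : Matrix (Fin n) (Fin n) k) A = 0)
    (hBlock : ∀ (m n : ℕ) (A₁ A₂ : Matrix (Fin m) (Fin m) k) (B₁ B₂ : Matrix (Fin n) (Fin n) k),
      IsUnit A₁ → IsUnit A₂ → IsUnit B₁ → IsUnit B₂ →
      A₁ * A₂ = A₂ * A₁ → B₁ * B₂ = B₂ * B₁ →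
      D (Matrix.reindex finSumFinEquiv finSumFinEquiv (Matrix.fromBlocks A₁ 0 0 B₁))
        (Matrix.reindex finSumFinEquiv finSumFinEquiv (Matrix.fromBlocks A₂ 0 0 B₂))
        = D A₁ A₂ + D B₁ B₂)
    (hConj : ∀ (n : ℕ) (A₁ A₂ S : Matrix (Fin n) (Fin n) k),
      IsUnit A₁ → IsUnit A₂ → IsUnit S → A₁ * A₂ = A₂ * A₁ →
      D (S * A₁ * S⁻¹) (S * A₂ * S⁻¹) = D A₁ A₂)
    (hHomotopy : ∀ (n : ℕ) (P₁ P₂ : Matrix (Fin n) (Fin n) (Polynomial k)),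
      IsUnit P₁ → IsUnit P₂ → P₁ * P₂ = P₂ * P₁ →
      D (P₁.map (Polynomial.eval 0)) (P₂.map (Polynomial.eval 0))
        = D (P₁.map (Polynomial.eval 1)) (P₂.map (Polynomial.eval 1))) :
    ∀ (n : ℕ) (A B C : Matrix (Fin n) (Fin n) k),
      IsUnit A → IsUnit B → IsUnit C →
      A * B = B * A → A * C = C * A → B * C = C * B →
      D (A * B) C = D A C + D B C := by
  intro n A B C hA hB hC hAB hAC hBC
  have hABC : Commute (A * B) C := Commute.mul_left hAC hBC
  calc D (A * B) C = D 1 C + D (A * B) C := by rw [(hId n C hC).2, zero_add]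
    _ = sumD D (fromBlocks 1 0 0 (A * B)) (fromBlocks C 0 0 C) :=
      (hBlock n n 1 C (A * B) C isUnit_one hC (hA.mul hB) hC (Commute.one_left C) hABC).symm
    _ = sumD D (fromBlocks 1 1 0 (A * B)) (fromBlocks C 0 0 C) :=
      (sumD_fromBlocks_upper_eq_diag hHomotopy 1 isUnit_one (hA.mul hB) hC (Commute.one_left C) hABC
        (Commute.one_left C)).symm
    _ = sumD D (fromBlocks 0 1 (-(1 * (A * B))) (1 + A * B)) (fromBlocks C 0 0 C) :=
      sumD_fromBlocks_one_eq_companion hConj isUnit_one (hA.mul hB) hC (Commute.one_left _)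
        (Commute.one_left C) hABC
    _ = sumD D (fromBlocks 0 1 (-(A * B)) (A + B)) (fromBlocks C 0 0 C) := by
      rw [one_mul]
      exact sumD_companion_eq_companion hHomotopy _ _ (hA.mul hB).neg hC hABC.neg_left
        ((Commute.one_left C).add_left hABC) (Commute.add_left hAC hBC)
    _ = sumD D (fromBlocks A 1 0 B) (fromBlocks C 0 0 C) :=
      (sumD_fromBlocks_one_eq_companion hConj hA hB hC hAB hAC hBC).symm
    _ = sumD D (fromBlocks A 0 0 B) (fromBlocks C 0 0 C) :=
      sumD_fromBlocks_upper_eq_diag hHomotopy 1 hA hB hC hAC hBC (Commute.one_left C)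
    _ = D A C + D B C := hBlock n n A C B C hA hC hB hC hAC hBC
end

section
/- Let D be a map from single invertible matrices over a field k (of all finite sizes) to an abelian group G that vanishes on identity matrices, is additive on block diagonal sums, is invariant under conjugation, and is invariant under polynomial homotopy. Then D vanishes on every elementary matrix (a matrix differing from the identity by one off-diagonal entry) and D factors through the determinant: if det A = det B for A, B ∈ GL_n(k), then D(A) = D(B). -/
/-!
For an invertible `Y`, the polynomial matrix `transvection i j (c X) * Y` joins `Y` to
`transvection i j c * Y`, so left multiplication by an elementary matrix does not change `D`. By Whitehead's identity `diag(u, u⁻¹)` is a product of six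
elementary matrices, a diagonal matrix of determinant one is a product of such two-entry diagonal
matrices, and Gaussian elimination writes every matrix of determinant one as elementary matrices
around such a diagonal one. Hence `D (M * B) = D B` whenever `det M = 1`; apply it to
`M = A * B⁻¹`.
-/

open Matrix Polynomial

def leftPeriods {M β : Type*} [Monoid M] (f : M → β) : Submonoid M where
  carrier := {a | IsUnit a ∧ ∀ b, IsUnit b → f (a * b) = f b}
  one_mem' := ⟨isUnit_one, fun b _ => by rw [one_mul]⟩
  mul_mem' := fun {a a'} ⟨ha, hfa⟩ ⟨ha', hfa'⟩ =>
    ⟨ha.mul ha', fun b hb => by rw [mul_assoc, hfa _ (ha'.mul hb), hfa' _ hb]⟩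

theorem apply_mul_of_mem_leftPeriods {M β : Type*} [Monoid M] {f : M → β} {a b : M}
    (ha : a ∈ leftPeriods f) (hb : IsUnit b) : f (a * b) = f b :=
  ha.2 b hb

namespace Matrix

variable {ι : Type*} [DecidableEq ι]

theorem map_transvection {R S : Type*} [CommRing R] [CommRing S] (φ : R →+* S) (i j : ι)
    (c : R) : (transvection i j c).map φ = transvection i j (φ c) := by
  simp [transvection, Matrix.map_add, map_single]

variable [Fintype ι]

theorem isUnit_transvection {R : Type*} [CommRing R] {i j : ι} (hij : i ≠ j) (c : R) :
    IsUnit (transvection i j c) := by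
  simp [isUnit_iff_isUnit_det, det_transvection_of_ne i j hij]

theorem transvection_mem_leftPeriods {R G : Type*} [CommRing R] {f : Matrix ι ι R → G}
    (hf : ∀ P : Matrix ι ι R[X], IsUnit P → f (P.map (eval 0)) = f (P.map (eval 1)))
    {i j : ι} (hij : i ≠ j) (c : R) : transvection i j c ∈ leftPeriods f := by
  refine ⟨isUnit_transvection hij c, fun Y hY => ?_⟩
  let P : Matrix ι ι R[X] := transvection i j (C c * X) * Y.map C
  have hP : ∀ r : R, P.map (eval r) = transvection i j (c * r) * Y := by
    intro r
    rw [← coe_evalRingHom, Matrix.map_mul, map_transvection]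
    simp [Function.comp_def]
  have hPunit : IsUnit P :=
    (isUnit_transvection hij _).mul (hY.map (C : R →+* R[X]).mapMatrix)
  simpa [hP] using (hf P hPunit).symm

variable {k : Type*} [Field k]

theorem diagonal_mulSingle_mul_mulSingle_inv_eq {i j : ι} (hij : i ≠ j) {u : k} (hu : u ≠ 0) :
    diagonal (Pi.mulSingle i u * Pi.mulSingle j u⁻¹) =
      transvection i j u * transvection j i (-u⁻¹) * transvection i j u *
        (transvection i j (-1) * transvection j i 1 * transvection i j (-1)) := by
  simp only [transvection, add_mul, mul_add, one_mul, mul_one, single_mul_single_same,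
    single_mul_single_of_ne, hij, hij.symm, ne_eq, not_false_eq_true, add_zero]
  ext a b
  simp only [Matrix.add_apply, one_apply, single_apply, diagonal_apply, Pi.mul_apply,
    Pi.mulSingle_apply]
  grind

variable {S : Submonoid (Matrix ι ι k)}

theorem diagonal_mulSingle_mul_mulSingle_inv_mem
    (hS : ∀ i j : ι, i ≠ j → ∀ c : k, transvection i j c ∈ S) (i j : ι) {u : k} (hu : u ≠ 0) :
    diagonal (Pi.mulSingle i u * Pi.mulSingle j u⁻¹) ∈ S := by
  rcases eq_or_ne i j with rfl | hij
  · simp [← Pi.mulSingle_mul, hu, S.one_mem]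
  · rw [diagonal_mulSingle_mul_mulSingle_inv_eq hij hu]
    repeat' refine S.mul_mem ?_ ?_
    all_goals first | exact hS _ _ hij _ | exact hS _ _ hij.symm _

theorem diagonal_mem_of_prod_eq_one
    (hS : ∀ i j : ι, i ≠ j → ∀ c : k, transvection i j c ∈ S) {d : ι → k}
    (hd : ∏ i, d i = 1) : diagonal d ∈ S := by
  cases isEmpty_or_nonempty ι
  · exact Subsingleton.elim (1 : Matrix ι ι k) (diagonal d) ▸ S.one_mem
  obtain ⟨i₀⟩ := ‹Nonempty ι›
  have hd0 : ∀ i, d i ≠ 0 := fun i hi => by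
    simp [Finset.prod_eq_zero (Finset.mem_univ i) hi] at hd
  -- the entries `(d i)⁻¹` collected at `i₀` multiply to `(∏ i, d i)⁻¹ = 1`
  have hfactor : ∏ i, (Pi.mulSingle i (d i) * Pi.mulSingle i₀ (d i)⁻¹) = d := by
    have := map_prod (MonoidHom.mulSingle (fun _ => k) i₀) (fun i => (d i)⁻¹) Finset.univ
    simp only [MonoidHom.mulSingle_apply, Finset.prod_inv_distrib, hd, inv_one,
      Pi.mulSingle_one] at this
    rw [Finset.prod_mul_distrib, Finset.univ_prod_mulSingle, ← this, mul_one]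
  change d ∈ S.comap (diagonalRingHom ι k).toMonoidHom
  rw [← hfactor]
  exact Submonoid.prod_mem _ fun i _ => diagonal_mulSingle_mul_mulSingle_inv_mem hS i i₀ (hd0 i)

theorem mem_of_det_eq_one
    (hS : ∀ i j : ι, i ≠ j → ∀ c : k, transvection i j c ∈ S) {M : Matrix ι ι k}
    (hM : M.det = 1) : M ∈ S :=
  diagonal_transvection_induction (· ∈ S) M
    (fun d hd => diagonal_mem_of_prod_eq_one hS (by rwa [hM, det_diagonal] at hd))
    (fun t => hS t.i t.j t.hij t.c) (fun _ _ => S.mul_mem)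

end Matrix

theorem determinant_factors_general (k : Type*) [Field k] (G : Type*) [AddCommGroup G]
    (D : ∀ {n : ℕ}, Matrix (Fin n) (Fin n) k → G)
    (hId : ∀ n : ℕ, D (1 : Matrix (Fin n) (Fin n) k) = 0)
    (hHomotopy : ∀ (n : ℕ) (P : Matrix (Fin n) (Fin n) (Polynomial k)), IsUnit P →
      D (P.map (Polynomial.eval 0)) = D (P.map (Polynomial.eval 1))) :
    (∀ (n : ℕ) (i j : Fin n), i ≠ j → ∀ c : k,
      D (1 + Matrix.single i j c) = 0) ∧
    (∀ (n : ℕ) (A B : Matrix (Fin n) (Fin n) k), IsUnit A → IsUnit B →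
      A.det = B.det → D A = D B) := by
  have hT (n : ℕ) (i j : Fin n) (hij : i ≠ j) (c : k) : transvection i j c ∈ leftPeriods (@D n) :=
    transvection_mem_leftPeriods (hHomotopy n) hij c
  refine ⟨fun n i j hij c => ?_, fun n A B _ hB hdet => ?_⟩
  · simpa [transvection, hId] using apply_mul_of_mem_leftPeriods (hT n i j hij c) isUnit_one
  · have hBdet : IsUnit B.det := (isUnit_iff_isUnit_det B).mp hB
    have hM : (A * B⁻¹).det = 1 := by
      rw [det_mul, det_nonsing_inv, hdet, Ring.mul_inverse_cancel _ hBdet]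
    calc D A = D (A * B⁻¹ * B) := by rw [nonsing_inv_mul_cancel_right _ _ hBdet]
      _ = D B := apply_mul_of_mem_leftPeriods (mem_of_det_eq_one (hT n) hM) hB

theorem determinant_factors (k : Type*) [Field k] (G : Type*) [AddCommGroup G]
    (D : ∀ {n : ℕ}, Matrix (Fin n) (Fin n) k → G)
    (hId : ∀ n : ℕ, D (1 : Matrix (Fin n) (Fin n) k) = 0)
    (hBlock : ∀ (m n : ℕ) (A : Matrix (Fin m) (Fin m) k) (B : Matrix (Fin n) (Fin n) k),
      IsUnit A → IsUnit B →
      D (Matrix.reindex finSumFinEquiv finSumFinEquiv (Matrix.fromBlocks A 0 0 B))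
        = D A + D B)
    (hConj : ∀ (n : ℕ) (A S : Matrix (Fin n) (Fin n) k), IsUnit A → IsUnit S →
      D (S * A * S⁻¹) = D A)
    (hHomotopy : ∀ (n : ℕ) (P : Matrix (Fin n) (Fin n) (Polynomial k)), IsUnit P →
      D (P.map (Polynomial.eval 0)) = D (P.map (Polynomial.eval 1))) :
    (∀ (n : ℕ) (i j : Fin n), i ≠ j → ∀ c : k,
      D (1 + Matrix.single i j c) = 0) ∧
    (∀ (n : ℕ) (A B : Matrix (Fin n) (Fin n) k), IsUnit A → IsUnit B →
      A.det = B.det → D A = D B) :=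
  determinant_factors_general k G D hId hHomotopy
end
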